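/- For every natural number n ≥ 0, Σ_{k=0}^{n} S(n,k) · (−1)^k · k! · H_{k−1} = (−1)^n · n + δ_{n,1}, where δ_{n,1} is the Kronecker symbol. -/

import Mathlib

open Finset

/-- Stirling numbers of the second kind. -/
def S2 : ℕ → ℕ → ℕ
  | 0, 0 => 1
  | 0, _ + 1 => 0
  | _ + 1, 0 => 0
  | n + 1, k + 1 => S2 n k + (k + 1) * S2 n (k + 1)

/-- Harmonic numbers `H_k = ∑_{j=1}^k 1/j` (so `H 0 = 0`). -/
noncomputable def H (k : ℕ) : ℚ := ∑ j ∈ Finset.Icc 1 k, (1 : ℚ) / j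

lemma S2_eq_zero : ∀ {n k : ℕ}, n < k → S2 n k = 0 := by
  intro n
  induction n with
  | zero => intro k h; match k, h with | k + 1, _ => rfl
  | succ n ih =>
    intro k h
    obtain ⟨k, rfl⟩ : ∃ m, k = m + 1 := ⟨k - 1, by omega⟩
    show S2 n k + (k + 1) * S2 n (k + 1) = 0
    rw [ih (by omega), ih (by omega)]
    ring

lemma H_zero : H 0 = 0 := by simp [H]

lemma H_succ (k : ℕ) : H (k + 1) = H k + 1 / (k + 1) := by
  unfold H
  rw [Finset.sum_Icc_succ_top (Nat.succ_le_succ (Nat.zero_le k))]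
  push_cast
  ring

lemma sum_shift_eq (f : ℕ → ℚ) (n : ℕ) (h0 : f 0 = 0) (htop : f (n + 1) = 0) :
    ∑ k ∈ range (n + 1), f (k + 1) = ∑ k ∈ range (n + 1), f k := by
  have h1 := Finset.sum_range_succ' f (n + 1)
  have h2 := Finset.sum_range_succ f (n + 1)
  rw [h2, htop, add_zero] at h1
  rw [h0, add_zero] at h1
  exact h1.symm

lemma sumA (n : ℕ) : ∑ k ∈ range (n + 1), (S2 n k : ℚ) * (-1) ^ k * k.factorial = (-1) ^ n := by
  induction n with
  | zero => simp [S2]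
  | succ n ih =>
    rw [Finset.sum_range_succ' _ (n + 1)]
    have hpt : ∀ k ∈ range (n + 1),
        (S2 (n + 1) (k + 1) : ℚ) * (-1) ^ (k + 1) * (k + 1).factorial
          = ((((k + 1 : ℕ) : ℚ) * (S2 n (k + 1) : ℚ) * (-1) ^ (k + 1) * (k + 1).factorial)
              - ((k : ℚ) * (S2 n k : ℚ) * (-1) ^ k * k.factorial))
            - (S2 n k : ℚ) * (-1) ^ k * k.factorial := by
      intro k _
      rw [show S2 (n + 1) (k + 1) = S2 n k + (k + 1) * S2 n (k + 1) from rfl]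
      push_cast [Nat.factorial_succ]
      ring
    rw [Finset.sum_congr rfl hpt, Finset.sum_sub_distrib,
      Finset.sum_range_sub (fun k => (k : ℚ) * (S2 n k : ℚ) * (-1) ^ k * k.factorial), ih]
    simp [S2, S2_eq_zero (Nat.lt_succ_self n)]
    ring

lemma sumC (n : ℕ) :
    ∑ k ∈ range (n + 1), (S2 n k : ℚ) * (-1) ^ k * k.factorial * H k = (-1) ^ n * n := by
  induction n with
  | zero => simp [S2, H_zero]
  | succ n ih =>
    rw [Finset.sum_range_succ' _ (n + 1)]
    have hpt : ∀ k ∈ range (n + 1),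
        (S2 (n + 1) (k + 1) : ℚ) * (-1) ^ (k + 1) * (k + 1).factorial * H (k + 1)
          = ((((k + 1 : ℕ) : ℚ) * ((S2 n (k + 1) : ℚ) * (-1) ^ (k + 1) * (k + 1).factorial * H (k + 1)))
              - ((k : ℚ) * ((S2 n k : ℚ) * (-1) ^ k * k.factorial * H k)))
            - (S2 n k : ℚ) * (-1) ^ k * k.factorial * H k
            - (S2 n k : ℚ) * (-1) ^ k * k.factorial := by
      intro k _
      rw [show S2 (n + 1) (k + 1) = S2 n k + (k + 1) * S2 n (k + 1) from rfl, H_succ]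
      push_cast [Nat.factorial_succ]
      have hk : (k : ℚ) + 1 ≠ 0 := by positivity
      field_simp
      ring
    rw [Finset.sum_congr rfl hpt, Finset.sum_sub_distrib, Finset.sum_sub_distrib,
      Finset.sum_range_sub
        (fun k => (k : ℚ) * ((S2 n k : ℚ) * (-1) ^ k * k.factorial * H k)), ih, sumA]
    simp [S2, S2_eq_zero (Nat.lt_succ_self n)]
    ring

/-- The auxiliary summand `S2 n k * (-1)^k * (k-1)!` (zero at `k = 0`). -/
noncomputable def fB (n : ℕ) : ℕ → ℚ
  | 0 => 0
  | k + 1 => (S2 n (k + 1) : ℚ) * (-1) ^ (k + 1) * k.factorial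

lemma S2_zero_right (n : ℕ) : S2 n 0 = if n = 0 then 1 else 0 := by
  cases n <;> rfl

lemma sumB (n : ℕ) : ∑ k ∈ range (n + 1), fB n k = -(if n = 1 then 1 else 0) := by
  cases n with
  | zero => simp [fB]
  | succ n =>
    rw [Finset.sum_range_succ' _ (n + 1)]
    have hpt : ∀ k ∈ range (n + 1),
        fB (n + 1) (k + 1)
          = ((S2 n (k + 1) : ℚ) * (-1) ^ (k + 1) * (k + 1).factorial)
            - ((S2 n k : ℚ) * (-1) ^ k * k.factorial) := by
      intro k _
      show (S2 (n + 1) (k + 1) : ℚ) * (-1) ^ (k + 1) * k.factorial = _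
      rw [show S2 (n + 1) (k + 1) = S2 n k + (k + 1) * S2 n (k + 1) from rfl]
      push_cast [Nat.factorial_succ]
      ring
    rw [Finset.sum_congr rfl hpt,
      Finset.sum_range_sub (fun k => (S2 n k : ℚ) * (-1) ^ k * k.factorial)]
    show _ - _ + fB (n + 1) 0 = _
    rw [show fB (n + 1) 0 = 0 from rfl, S2_eq_zero (Nat.lt_succ_self n), S2_zero_right]
    by_cases h : n = 0 <;> simp [h]

/-- `∑_{k=0}^n S(n,k) (-1)^k k! H_{k-1} = (-1)^n n + δ_{n,1}`. -/
theorem stirling_sum_harmonic (n : ℕ) :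
    ∑ k ∈ Finset.range (n + 1), (S2 n k : ℚ) * (-1) ^ k * k.factorial * H (k - 1)
      = (-1) ^ n * n + if n = 1 then 1 else 0 := by
  have hpt : ∀ k ∈ range (n + 1),
      (S2 n k : ℚ) * (-1) ^ k * k.factorial * H (k - 1)
        = (S2 n k : ℚ) * (-1) ^ k * k.factorial * H k - fB n k := by
    intro k _
    cases k with
    | zero => simp [fB, H_zero]
    | succ k =>
      show (S2 n (k + 1) : ℚ) * (-1) ^ (k + 1) * (k + 1).factorial * H k = _
      rw [show fB n (k + 1) = (S2 n (k + 1) : ℚ) * (-1) ^ (k + 1) * k.factorial from rfl, H_succ]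
      push_cast [Nat.factorial_succ]
      have hk : (k : ℚ) + 1 ≠ 0 := by positivity
      field_simp
      ring
  rw [Finset.sum_congr rfl hpt, Finset.sum_sub_distrib, sumC, sumB]
  ring
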